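/- Let A be an associative algebra over a commutative ring K and let r = Σᵢ rᵢ¹ ⊗ rᵢ², s = Σⱼ sⱼ¹ ⊗ sⱼ² ∈ A ⊗ A be A-centralizing elements. Define the binary operation a ∘ b = (Σᵢ rᵢ¹ a rᵢ² − Σⱼ sⱼ¹ a sⱼ²) b on A. Then (A,∘) is a left pre-Lie algebra: (a∘b − b∘a)∘c = a∘(b∘c) − b∘(a∘c) for all a,b,c ∈ A. -/
import Mathlib


open TensorProduct

/-- For `x = Σᵢ xᵢ¹ ⊗ xᵢ² ∈ A ⊗ A` and `a ∈ A`, the element `Σᵢ xᵢ¹ a xᵢ²`. -/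
noncomputable def midMul {K A : Type*} [CommRing K] [NonUnitalRing A] [Module K A]
    [SMulCommClass K A A] [IsScalarTower K A A] (x : A ⊗[K] A) (a : A) : A :=
  LinearMap.mul' K A ((LinearMap.mulRight K a).rTensor A x)

section aux

variable {K A : Type*} [CommRing K] [NonUnitalRing A] [Module K A]
    [SMulCommClass K A A] [IsScalarTower K A A]

lemma midMul_tmul (p q a : A) : midMul (p ⊗ₜ[K] q) a = p * a * q := by
  simp [midMul]

lemma midMul_sub_arg (x : A ⊗[K] A) (u v : A) :
    midMul x (u - v) = midMul x u - midMul x v := by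
  induction x using TensorProduct.induction_on with
  | zero => simp [midMul]
  | tmul p q => simp [midMul_tmul, mul_sub, sub_mul]
  | add y z hy hz =>
      simp only [midMul, map_add] at hy hz ⊢
      rw [hy, hz]; abel

lemma midMul_rTensor_mulLeft (x : A ⊗[K] A) (c b : A) :
    midMul ((LinearMap.mulLeft K c).rTensor A x) b = c * midMul x b := by
  induction x using TensorProduct.induction_on with
  | zero => simp [midMul]
  | tmul p q => simp [midMul_tmul, mul_assoc]
  | add y z hy hz => simp only [midMul, map_add] at hy hz ⊢; rw [hy, hz, mul_add]

lemma midMul_lTensor_mulRight (x : A ⊗[K] A) (c b : A) :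
    midMul ((LinearMap.mulRight K c).lTensor A x) b = midMul x b * c := by
  induction x using TensorProduct.induction_on with
  | zero => simp [midMul]
  | tmul p q => simp [midMul_tmul, mul_assoc]
  | add y z hy hz => simp only [midMul, map_add] at hy hz ⊢; rw [hy, hz, add_mul]

lemma midMul_rTensor_mulRight (x : A ⊗[K] A) (c b : A) :
    midMul ((LinearMap.mulRight K c).rTensor A x) b = midMul x (c * b) := by
  induction x using TensorProduct.induction_on with
  | zero => simp [midMul]
  | tmul p q => simp [midMul_tmul, mul_assoc]
  | add y z hy hz => simp only [midMul, map_add] at hy hz ⊢; rw [hy, hz]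

/-- If `r` is `A`-centralizing, every value of `midMul r` is central. -/
lemma midMul_comm {r : A ⊗[K] A}
    (hr : ∀ a : A,
      (LinearMap.mulLeft K a).rTensor A r = (LinearMap.mulRight K a).lTensor A r)
    (b c : A) : c * midMul r b = midMul r b * c := by
  rw [← midMul_rTensor_mulLeft, ← midMul_lTensor_mulRight, hr]

/-- If `r` is `A`-centralizing and `c` is central, then
`midMul r (c * b) = c * midMul r b`. -/
lemma midMul_central_mul {r : A ⊗[K] A}
    (hr : ∀ a : A,
      (LinearMap.mulLeft K a).rTensor A r = (LinearMap.mulRight K a).lTensor A r)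
    {c : A} (hc : ∀ z : A, c * z = z * c) (b : A) :
    midMul r (c * b) = c * midMul r b := by
  have h1 : LinearMap.mulRight K c = LinearMap.mulLeft K c := by
    ext z; simp [(hc z).symm]
  rw [← midMul_rTensor_mulRight, h1, hr, midMul_lTensor_mulRight, ← hc]

end aux

/-- If `r, s ∈ A ⊗ A` are `A`-centralizing, then
`a ∘ b = (Σᵢ rᵢ¹ a rᵢ² − Σⱼ sⱼ¹ a sⱼ²) b` makes `A` a left pre-Lie algebra. -/
theorem centralizing_preLie {K A : Type*} [CommRing K] [NonUnitalRing A]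
    [Module K A] [SMulCommClass K A A] [IsScalarTower K A A]
    (r s : A ⊗[K] A)
    (hr : ∀ a : A,
      (LinearMap.mulLeft K a).rTensor A r = (LinearMap.mulRight K a).lTensor A r)
    (hs : ∀ a : A,
      (LinearMap.mulLeft K a).rTensor A s = (LinearMap.mulRight K a).lTensor A s)
    (circ : A → A → A)
    (hcirc : ∀ a b : A, circ a b = (midMul r a - midMul s a) * b) :
    ∀ a b c : A,
      circ (circ a b - circ b a) c = circ a (circ b c) - circ b (circ a c) := by
  set T : A → A := fun x => midMul r x - midMul s x with hT
  have hcentral : ∀ x z : A, T x * z = z * T x := by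
    intro x z
    simp only [hT, sub_mul, mul_sub, midMul_comm hr, midMul_comm hs]
  have hTmul : ∀ x b : A, T (T x * b) = T x * T b := by
    intro x b
    have hc : ∀ z : A, T x * z = z * T x := hcentral x
    simp only [hT]
    rw [midMul_central_mul hr hc, midMul_central_mul hs hc, mul_sub]
  have hTsub : ∀ u v : A, T (u - v) = T u - T v := by
    intro u v
    simp only [hT, midMul_sub_arg]; abel
  intro a b c
  simp only [hcirc]
  show T (T a * b - T b * a) * c = T a * (T b * c) - T b * (T a * c)
  rw [hTsub, hTmul, hTmul, ← mul_assoc, ← mul_assoc, sub_mul, sub_mul]
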